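/- arXiv:2001.00291 — 9 statements merged into one kernel-verified Lean document; each statement's English description precedes it below -/
import Mathlib

section
/- For p ∈ (0,1) and q = 1−p with p ≠ 1/2, and integer n ≥ 3, the vector π on {0,1,…,n−1} with π_0 = 1/(2 + n·p·q·(p^{n−2}−q^{n−2})/(p^n−q^n)) and π_i = Π_i·π_0 where Π_i = −[(p/q)((p/q)^{n−2}−1)/((p/q)^n−1)]·((p/q)^i−1) + (p/q)^{i−1} for 1 ≤ i ≤ n−1, is the unique stationary distribution of the random walk on the n-cycle whose transition probabilities are: from state 0, move to state 1 with probability q and to state n−1 with probability p; from state i (1 ≤ i ≤ n−1), move to state i+1 mod n with probability p and to state i−1 with probability q. -/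
/-!
Irreducibility settles uniqueness: if `μ > 0` and `ν` are stationary with equal mass, then
`ν - t μ`, with `t` the minimum of `ν i / μ i`, is a nonnegative stationary vector with a zero,
and along a positive-probability path `i → j` a zero at `j` forces a zero at `i`.

For existence, put `r = p / q` and `s_m = 1 + r + ⋯ + r^(m-1)`. Multiplying the paper's `Π_k`
by `s_n` gives the weights `s_n` at `0` and `r s_(n-2) + (1 + r) r^(k-1)` at `k ≥ 1`, which are
manifestly positive; their balance equations are polynomial identities in `r`, once
`(r - 1) s_m = r^m - 1` is used at the states `0` and `1`.
-/

open Finset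

namespace MarkovChain

variable {ι : Type*} [Fintype ι]

def IsStationary (P : ι → ι → ℝ) (ν : ι → ℝ) : Prop :=
  ∀ j, ∑ i, ν i * P i j = ν j

def IsIrreducible (P : ι → ι → ℝ) : Prop :=
  ∀ i j, Relation.ReflTransGen (fun a b => 0 < P a b) i j

variable {P : ι → ι → ℝ} {ν μ : ι → ℝ}

theorem IsStationary.sub (hν : IsStationary P ν) (hμ : IsStationary P μ) :
    IsStationary P (fun i => ν i - μ i) := fun j => by
  simp only [sub_mul, sum_sub_distrib, hν j, hμ j]

theorem IsStationary.const_mul (hν : IsStationary P ν) (c : ℝ) :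
    IsStationary P (fun i => c * ν i) := fun j => by
  simp only [mul_assoc, ← mul_sum, hν j]

theorem IsStationary.normalize (hν : IsStationary P ν) (hν0 : ∀ i, 0 ≤ ν i)
    (hνsum : 0 < ∑ i, ν i) :
    (∀ i, 0 ≤ (∑ j, ν j)⁻¹ * ν i) ∧ ∑ i, (∑ j, ν j)⁻¹ * ν i = 1 ∧
      IsStationary P (fun i => (∑ j, ν j)⁻¹ * ν i) :=
  ⟨fun i => mul_nonneg (inv_nonneg.2 hνsum.le) (hν0 i),
    by rw [← mul_sum, inv_mul_cancel₀ hνsum.ne'], hν.const_mul _⟩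

theorem IsStationary.apply_eq_zero_of_reflTransGen (hP : ∀ i j, 0 ≤ P i j)
    (hν : IsStationary P ν) (hν0 : ∀ i, 0 ≤ ν i) {i j : ι}
    (hij : Relation.ReflTransGen (fun a b => 0 < P a b) i j) (hj : ν j = 0) : ν i = 0 := by
  induction hij using Relation.ReflTransGen.head_induction_on with
  | refl => exact hj
  | @head a b hab _ ih =>
    have hle : ν a * P a b ≤ ν b := hν b ▸
      single_le_sum (fun k _ => mul_nonneg (hν0 k) (hP k b)) (mem_univ a)
    rw [ih] at hle
    exact le_antisymm (nonpos_of_mul_nonpos_left hle hab) (hν0 a)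

theorem IsStationary.eq_of_sum_eq (hP : ∀ i j, 0 ≤ P i j) (hirr : IsIrreducible P)
    (hν : IsStationary P ν) (hμ : IsStationary P μ) (hμ0 : ∀ i, 0 ≤ μ i)
    (hsum : ∑ i, ν i = ∑ i, μ i) (hμsum : ∑ i, μ i ≠ 0) : ν = μ := by
  have hμpos : ∀ i, 0 < μ i := fun i => (hμ0 i).lt_of_ne' fun hi => hμsum <|
    sum_eq_zero fun j _ => hμ.apply_eq_zero_of_reflTransGen hP hμ0 (hirr j i) hi
  obtain ⟨i, -, -⟩ := exists_ne_zero_of_sum_ne_zero hμsum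
  obtain ⟨i₀, -, hmin⟩ := exists_min_image univ (fun i => ν i / μ i) ⟨i, mem_univ i⟩
  set t := ν i₀ / μ i₀
  have hνμ (j : ι) : ν j = t * μ j := by
    refine sub_eq_zero.1 <| (hν.sub (hμ.const_mul t)).apply_eq_zero_of_reflTransGen hP
      (fun k => sub_nonneg.2 ?_) (hirr j i₀) (by simp [t, div_mul_cancel₀ _ (hμpos i₀).ne'])
    exact (le_div_iff₀ (hμpos k)).1 (hmin k (mem_univ k))
  have ht : t = 1 := by
    simp only [hνμ, ← mul_sum] at hsum
    exact (mul_eq_right₀ hμsum).1 hsum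
  funext j
  rw [hνμ, ht, one_mul]

end MarkovChain

open MarkovChain

def cycleKernel (n : ℕ) [NeZero n] (p q : ℝ) (i j : Fin n) : ℝ :=
  (if j = i + 1 then (if i = 0 then q else p) else 0) +
    (if j = i - 1 then (if i = 0 then p else q) else 0)

section CycleKernel

variable {n : ℕ} [NeZero n] {p q : ℝ}

theorem cycleKernel_nonneg (hp : 0 ≤ p) (hq : 0 ≤ q) (i j : Fin n) :
    0 ≤ cycleKernel n p q i j := by
  unfold cycleKernel
  split_ifs <;> positivity

open Fin.NatCast in
theorem cycleKernel_isIrreducible (hp : 0 < p) (hq : 0 < q) :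
    IsIrreducible (cycleKernel n p q) := by
  have hstep (i : Fin n) : 0 < cycleKernel n p q i (i + 1) := by
    unfold cycleKernel
    rw [if_pos rfl]
    split_ifs <;> positivity
  have hreach (i : Fin n) (k : ℕ) :
      Relation.ReflTransGen (fun a b => 0 < cycleKernel n p q a b) i (i + (k : Fin n)) := by
    induction k with
    | zero => simpa using Relation.ReflTransGen.refl
    | succ k ih => exact ih.tail (by rw [Nat.cast_succ, ← add_assoc]; exact hstep _)
  intro i j
  simpa using hreach i (j - i).val

theorem sum_mul_cycleKernel (ν : Fin n → ℝ) (j : Fin n) :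
    ∑ i, ν i * cycleKernel n p q i j =
      ν (j - 1) * (if j - 1 = 0 then q else p) + ν (j + 1) * (if j + 1 = 0 then p else q) := by
  have hprev (i : Fin n) : j = i + 1 ↔ i = j - 1 := by rw [eq_sub_iff_add_eq, eq_comm]
  have hnext (i : Fin n) : j = i - 1 ↔ i = j + 1 := by rw [eq_sub_iff_add_eq, eq_comm]
  simp only [cycleKernel, mul_add, sum_add_distrib, mul_ite, mul_zero, hprev, hnext]
  simp

end CycleKernel

def cycleWeight (r : ℝ) (n k : ℕ) : ℝ :=
  if k = 0 then ∑ i ∈ range n, r ^ i else r * ∑ i ∈ range (n - 2), r ^ i + (1 + r) * r ^ (k - 1)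

section CycleWeight

variable {r : ℝ} {n : ℕ}

theorem cycleWeight_zero : cycleWeight r n 0 = ∑ i ∈ range n, r ^ i := if_pos rfl

theorem cycleWeight_succ (k : ℕ) :
    cycleWeight r n (k + 1) = r * ∑ i ∈ range (n - 2), r ^ i + (1 + r) * r ^ k :=
  if_neg k.succ_ne_zero

theorem cycleWeight_pos (hr : 0 < r) (hn : n ≠ 0) (k : ℕ) : 0 < cycleWeight r n k := by
  unfold cycleWeight
  split_ifs
  · exact geom_sum_pos hr.le hn
  · positivity

theorem sum_cycleWeight (hn : 2 ≤ n) :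
    ∑ k ∈ range n, cycleWeight r n k =
      2 * ∑ i ∈ range n, r ^ i + n * r * ∑ i ∈ range (n - 2), r ^ i := by
  obtain ⟨N, rfl⟩ : ∃ N, n = N + 2 := ⟨n - 2, by omega⟩
  simp only [sum_range_succ' (cycleWeight r (N + 2)), cycleWeight_succ, cycleWeight_zero,
    Nat.add_sub_cancel, sum_add_distrib, sum_const, card_range, nsmul_eq_mul, ← mul_sum]
  rw [geom_sum_succ (n := N + 1), geom_sum_succ (n := N)]
  push_cast
  ring

theorem cycleWeight_div_geom_sum (hr : 0 < r) (hr1 : r ≠ 1) (hn : 2 ≤ n) {k : ℕ} (hk : k ≠ 0) :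
    cycleWeight r n k / ∑ i ∈ range n, r ^ i =
      -(r * (r ^ (n - 2) - 1) / (r ^ n - 1)) * (r ^ k - 1) + r ^ (k - 1) := by
  obtain ⟨N, rfl⟩ : ∃ N, n = N + 2 := ⟨n - 2, by omega⟩
  obtain ⟨m, rfl⟩ : ∃ m, k = m + 1 := ⟨k - 1, by omega⟩
  have hs : 0 < ∑ i ∈ range (N + 2), r ^ i := geom_sum_pos hr.le (by omega)
  have hr1' : r - 1 ≠ 0 := sub_ne_zero.2 hr1
  have hsN : ∑ i ∈ range (N + 2), r ^ i = 1 + r + r ^ 2 * ∑ i ∈ range N, r ^ i := by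
    rw [geom_sum_succ, geom_sum_succ]
    ring
  have hsm := geom_sum_mul r (m + 1)
  simp only [cycleWeight_succ, Nat.add_sub_cancel]
  rw [← geom_sum_mul r (N + 2), ← geom_sum_mul r N, ← hsm]
  field_simp
  rw [hsN]
  linear_combination (r * ∑ i ∈ range N, r ^ i) * hsm

theorem isStationary_cycleWeight [NeZero n] (hr : 1 + r ≠ 0) (hn : 3 ≤ n) :
    IsStationary (cycleKernel n (r * (1 + r)⁻¹) (1 + r)⁻¹) (fun j => cycleWeight r n j) := by
  obtain ⟨N, rfl⟩ : ∃ N, n = N + 3 := ⟨n - 3, by omega⟩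
  set w := cycleWeight r (N + 3)
  set S := ∑ i ∈ range (N + 1), r ^ i
  have hS : S * (r - 1) = r ^ (N + 1) - 1 := geom_sum_mul r (N + 1)
  have hw0 : w 0 = S + r ^ (N + 1) + r ^ (N + 2) := by
    simp only [w, cycleWeight_zero, sum_range_succ, S]
  have hw (k : ℕ) : w (k + 1) = r * S + (1 + r) * r ^ k := cycleWeight_succ k
  have balance_zero : w (N + 2) * (r * (1 + r)⁻¹) + w 1 * (1 + r)⁻¹ = w 0 := by
    rw [hw0, hw, hw]
    field_simp
    linear_combination (1 + r) * hS
  have balance_one : w 0 * (1 + r)⁻¹ + w 2 * (1 + r)⁻¹ = w 1 := by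
    rw [hw0, hw, hw]
    field_simp
    linear_combination -(1 + r) * hS
  have balance_mid (k : ℕ) :
      w (k + 1) * (r * (1 + r)⁻¹) + w (k + 3) * (1 + r)⁻¹ = w (k + 2) := by
    rw [hw, hw, hw]
    field_simp
    ring
  have balance_last : w (N + 1) * (r * (1 + r)⁻¹) + w 0 * (r * (1 + r)⁻¹) = w (N + 2) := by
    rw [hw0, hw, hw]
    field_simp
    ring
  intro j
  rw [sum_mul_cycleKernel]
  obtain ⟨k, hk⟩ := j
  rcases k with _ | _ | m
  · simpa using balance_zero
  · simpa [Fin.ext_iff, Fin.val_add_one] using balance_one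
  obtain hm | rfl : m + 1 ≤ N ∨ m = N := by omega
  · have hprev : (⟨m + 1 + 1, hk⟩ - 1 : Fin (N + 3)) = ⟨m + 1, by omega⟩ := by
      simp [Fin.ext_iff, Fin.coe_sub_one]
    have hnext : (⟨m + 1 + 1, hk⟩ + 1 : Fin (N + 3)) = ⟨m + 3, by omega⟩ :=
      Fin.ext (Fin.val_add_one_of_lt' (show m + 2 + 1 < N + 3 by omega))
    simpa [hprev, hnext, Fin.ext_iff] using balance_mid m
  · simpa [Fin.ext_iff, Fin.coe_sub_one, Fin.val_add_one] using balance_last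

theorem isStationary_cycleWeight_div [NeZero n] {p q : ℝ} (hq : q ≠ 0) (hpq : p + q = 1)
    (hn : 3 ≤ n) : IsStationary (cycleKernel n p q) (fun j => cycleWeight (p / q) n j) := by
  have hqr : q * (1 + p / q) = 1 := by rw [mul_add, mul_div_cancel₀ _ hq, mul_one, add_comm, hpq]
  have hr : 1 + p / q ≠ 0 := right_ne_zero_of_mul_eq_one hqr
  convert isStationary_cycleWeight hr hn using 2
  · rw [← eq_inv_of_mul_eq_one_left hqr, div_mul_cancel₀ _ hq]
  · exact eq_inv_of_mul_eq_one_left hqr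

end CycleWeight

theorem two_add_mul_div_eq_sum_cycleWeight_div {p q : ℝ} (hp : 0 < p) (hq : 0 < q) (hpq : p ≠ q)
    {n : ℕ} (hn : 2 ≤ n) :
    2 + n * p * q * (p ^ (n - 2) - q ^ (n - 2)) / (p ^ n - q ^ n) =
      (∑ k ∈ range n, cycleWeight (p / q) n k) / ∑ i ∈ range n, (p / q) ^ i := by
  rw [sum_cycleWeight hn]
  obtain ⟨N, rfl⟩ : ∃ N, n = N + 2 := ⟨n - 2, by omega⟩
  obtain ⟨r, hr⟩ : ∃ r, p / q = r := ⟨_, rfl⟩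
  have hr0 : 0 < r := hr ▸ div_pos hp hq
  have hr1 : r - 1 ≠ 0 := fun h => hpq (by rw [← div_eq_one_iff_eq hq.ne', hr]; linarith)
  obtain rfl : p = r * q := by rw [← hr, div_mul_cancel₀ _ hq.ne']
  have hs : 0 < ∑ i ∈ range (N + 2), r ^ i := geom_sum_pos hr0.le (by omega)
  have hpow (k : ℕ) : (r * q) ^ k - q ^ k = q ^ k * ((∑ i ∈ range k, r ^ i) * (r - 1)) := by
    rw [geom_sum_mul, mul_pow]
    ring
  rw [hr, Nat.add_sub_cancel, hpow, hpow]
  field_simp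
  ring

/-- explicit unique stationary distribution of the random walk on
the `n`-cycle where from state `0` one moves up with probability `q` and down
with probability `p`, and from every other state up with probability `p` and
down with probability `q` (Example 3 of the paper). -/
theorem cycle_stationary_example3 (n : ℕ) [NeZero n] (hn : 3 ≤ n)
    (p : ℝ) (hp : p ∈ Set.Ioo (0:ℝ) 1) (hphalf : p ≠ 1/2)
    (q : ℝ) (hq : q = 1 - p)
    (P : Fin n → Fin n → ℝ)
    (hP : ∀ i j, P i j = (if j = i + 1 then (if i = 0 then q else p) else 0)
                        + (if j = i - 1 then (if i = 0 then p else q) else 0))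
    (Pi : ℕ → ℝ) (hPi0 : Pi 0 = 1)
    (hPi : ∀ i, 1 ≤ i → i ≤ n - 1 →
      Pi i = -((p/q) * ((p/q)^(n-2) - 1) / ((p/q)^n - 1)) * ((p/q)^i - 1)
              + (p/q)^(i-1))
    (π : Fin n → ℝ)
    (hπ : ∀ i : Fin n,
      π i = Pi (i : ℕ) * (1 / (2 + n * p * q * (p^(n-2) - q^(n-2)) / (p^n - q^n)))) :
    ((∀ i, 0 ≤ π i) ∧ (∑ i, π i) = 1 ∧ ∀ j, ∑ i, π i * P i j = π j)
    ∧ ∀ π' : Fin n → ℝ,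
        (∀ i, 0 ≤ π' i) → (∑ i, π' i) = 1 → (∀ j, ∑ i, π' i * P i j = π' j) →
        π' = π := by
  obtain ⟨hp0, hp1⟩ := hp
  have hq0 : 0 < q := by linarith
  have hpq : p ≠ q := fun h => hphalf (by linarith)
  have hr0 : 0 < p / q := div_pos hp0 hq0
  have hr1 : p / q ≠ 1 := fun h => hpq ((div_eq_one_iff_eq hq0.ne').1 h)
  set r := p / q with hr
  set w : Fin n → ℝ := fun j => cycleWeight r n j
  have hs : 0 < ∑ i ∈ range n, r ^ i := geom_sum_pos hr0.le (NeZero.ne n)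
  have hwpos (j : Fin n) : 0 < w j := cycleWeight_pos hr0 (NeZero.ne n) j
  have hwsum : 0 < ∑ j, w j := sum_pos (fun j _ => hwpos j) univ_nonempty
  have hwsum_range : ∑ j, w j = ∑ k ∈ range n, cycleWeight r n k :=
    Fin.sum_univ_eq_sum_range (cycleWeight r n) n
  have hπw : π = fun i => (∑ j, w j)⁻¹ * w i := funext fun i => by
    have hPiw : Pi i = w i / ∑ i ∈ range n, r ^ i := by
      rcases Nat.eq_zero_or_pos i with h | h
      · obtain rfl : i = 0 := Fin.ext h
        simp [w, hPi0, cycleWeight, hs.ne']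
      · rw [hPi i h (by omega), cycleWeight_div_geom_sum hr0 hr1 (by omega) h.ne']
    rw [hπ, hPiw, two_add_mul_div_eq_sum_cycleWeight_div hp0 hq0 hpq (by omega), ← hr,
      ← hwsum_range]
    field_simp
  obtain rfl : P = cycleKernel n p q := funext fun i => funext (hP i)
  subst hπw
  obtain ⟨hnn, hsum, hstat⟩ := (isStationary_cycleWeight_div hq0.ne' (by linarith) hn).normalize
    (fun j => (hwpos j).le) hwsum
  refine ⟨⟨hnn, hsum, hstat⟩, fun π' _ hπ'sum hπ' => ?_⟩
  exact IsStationary.eq_of_sum_eq (cycleKernel_nonneg hp0.le hq0.le)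
    (cycleKernel_isIrreducible hp0 hq0) hπ' hstat hnn (hπ'sum.trans hsum.symm) (hsum ▸ one_ne_zero)
end

section
/- For p ∈ (0,1), q := 1−p, p ≠ 1/2, n ≥ 3, p_0 ∈ (0,1), q_0 := 1−p_0: with Π_0 := 1 and Π_i := −[((p_0/q)(p/q)^{n−1} − q_0/q)/((p/q)^n − 1)]·((p/q)^i − 1) + (p_0/q)(p/q)^{i−1} for 1 ≤ i ≤ n−1, the sum Σ_{i=0}^{n−1} Π_i equals 1 − (p_0 − q_0)/(p − q) + n·(p_0·p^{n−1} − q_0·q^{n−1})/(p^n − q^n). -/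
/-!
Writing `r = p / q`, each `Π_i` with `i ≥ 1` is affine in `r ^ i`, so the sum is `(n - 1) A` plus a
geometric sum, where `A` is the constant in front of `r ^ i - 1`. Clearing the powers of `q`, `A`
is exactly the coefficient `(p₀ p^(n-1) - q₀ q^(n-1)) / (p^n - q^n)` of `n` in the closed form, and
the geometric part evaluates to `A - (p₀ - q₀) / (p - q)`.
-/

open Finset

lemma sum_range_affine_add_geom {R : Type*} [CommRing R] (A B r : R) (m : ℕ) :
    ∑ j ∈ range m, (-A * (r ^ (j + 1) - 1) + B * r ^ j)
      = m * A + (B - A * r) * ∑ j ∈ range m, r ^ j := by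
  have hterm : ∀ j, -A * (r ^ (j + 1) - 1) + B * r ^ j = (B - A * r) * r ^ j + A := by
    intro j; ring
  simp only [hterm, sum_add_distrib, ← mul_sum, sum_const, card_range, nsmul_eq_mul]
  ring

section Homogeneous

variable {K : Type*} [Field K] {p q : K}

lemma div_pow_coeff_eq (hq : q ≠ 0) (p₀ q₀ : K) (m : ℕ) :
    ((p₀ / q) * (p / q) ^ m - q₀ / q) / ((p / q) ^ (m + 1) - 1)
      = (p₀ * p ^ m - q₀ * q ^ m) / (p ^ (m + 1) - q ^ (m + 1)) := by
  have hnum : (p₀ / q) * (p / q) ^ m - q₀ / q = (p₀ * p ^ m - q₀ * q ^ m) / q ^ (m + 1) := by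
    rw [div_pow]; field_simp; ring
  have hden : (p / q) ^ (m + 1) - 1 = (p ^ (m + 1) - q ^ (m + 1)) / q ^ (m + 1) := by
    rw [div_pow]; field_simp
  rw [hnum, hden, div_div_div_cancel_right₀ (pow_ne_zero _ hq)]

lemma div_pow_geom_part_eq {m : ℕ} (hq : q ≠ 0) (hpq : p ≠ q)
    (hpqm : p ^ (m + 1) ≠ q ^ (m + 1)) (p₀ q₀ : K) :
    (p₀ / q - (p₀ * p ^ m - q₀ * q ^ m) / (p ^ (m + 1) - q ^ (m + 1)) * (p / q))
        * (((p / q) ^ m - 1) / (p / q - 1))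
      = (p₀ * p ^ m - q₀ * q ^ m) / (p ^ (m + 1) - q ^ (m + 1)) - (p₀ - q₀) / (p - q) := by
  have hpq' : p - q ≠ 0 := sub_ne_zero.mpr hpq
  have hpqm' : p ^ (m + 1) - q ^ (m + 1) ≠ 0 := sub_ne_zero.mpr hpqm
  rw [div_pow]
  field_simp
  ring

end Homogeneous

theorem sum_Pi_example2_general (n : ℕ) (hn : 3 ≤ n) (p p₀ : ℝ)
    (hp : p ∈ Set.Ioo (0:ℝ) 1) (hphalf : p ≠ 1/2)
    (q q₀ : ℝ) (hq : q = 1 - p)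
    (Pi : ℕ → ℝ) (hPi0 : Pi 0 = 1)
    (hPi : ∀ i, 1 ≤ i → i ≤ n - 1 →
      Pi i = -(((p₀/q) * (p/q)^(n-1) - q₀/q) / ((p/q)^n - 1)) * ((p/q)^i - 1)
              + (p₀/q) * (p/q)^(i-1)) :
    ∑ i ∈ Finset.range n, Pi i
      = 1 - (p₀ - q₀)/(p - q) + n * (p₀ * p^(n-1) - q₀ * q^(n-1)) / (p^n - q^n) := by
  obtain ⟨hp_pos, hp_lt_one⟩ := hp
  have hq_pos : 0 < q := by linarith
  have hpq : p ≠ q := fun h => hphalf (by linarith)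
  obtain ⟨m, rfl⟩ : ∃ m, n = m + 1 := ⟨n - 1, by omega⟩
  have hpqm : p ^ (m + 1) ≠ q ^ (m + 1) :=
    fun h => hpq ((pow_left_inj₀ hp_pos.le hq_pos.le (Nat.succ_ne_zero m)).mp h)
  have hr : p / q ≠ 1 := fun h => hpq ((div_eq_one_iff_eq hq_pos.ne').mp h)
  have hterm : ∀ j ∈ range m, Pi (j + 1)
      = -((p₀ * p ^ m - q₀ * q ^ m) / (p ^ (m + 1) - q ^ (m + 1))) * ((p / q) ^ (j + 1) - 1)
          + p₀ / q * (p / q) ^ j := by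
    intro j hj
    rw [hPi (j + 1) (by omega) (by simp at hj; omega), Nat.add_sub_cancel, Nat.add_sub_cancel,
      div_pow_coeff_eq hq_pos.ne']
  rw [sum_range_succ', hPi0, sum_congr rfl hterm, sum_range_affine_add_geom, geom_sum_eq hr,
    div_pow_geom_part_eq hq_pos.ne' hpq hpqm, Nat.add_sub_cancel]
  push_cast
  ring

/-- closed form for the sum of the stationary-distribution weights
`Π_i` in Example 2 (general `p₀`, constant `p` elsewhere). -/
theorem sum_Pi_example2 (n : ℕ) (hn : 3 ≤ n) (p p₀ : ℝ)
    (hp : p ∈ Set.Ioo (0:ℝ) 1) (hp0 : p₀ ∈ Set.Ioo (0:ℝ) 1) (hphalf : p ≠ 1/2)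
    (q q₀ : ℝ) (hq : q = 1 - p) (hq0 : q₀ = 1 - p₀)
    (Pi : ℕ → ℝ) (hPi0 : Pi 0 = 1)
    (hPi : ∀ i, 1 ≤ i → i ≤ n - 1 →
      Pi i = -(((p₀/q) * (p/q)^(n-1) - q₀/q) / ((p/q)^n - 1)) * ((p/q)^i - 1)
              + (p₀/q) * (p/q)^(i-1)) :
    ∑ i ∈ Finset.range n, Pi i
      = 1 - (p₀ - q₀)/(p - q) + n * (p₀ * p^(n-1) - q₀ * q^(n-1)) / (p^n - q^n) :=
  sum_Pi_example2_general n hn p p₀ hp hphalf q q₀ hq Pi hPi0 hPi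
end

section
/- For p ∈ (0,1), q := 1−p, p ≠ 1/2, n ≥ 3: with Π_0 := 1 and Π_i := −[(p/q)((p/q)^{n−2} − 1)/((p/q)^n − 1)]·((p/q)^i − 1) + (p/q)^{i−1} for 1 ≤ i ≤ n−1, the sum Σ_{i=0}^{n−1} Π_i equals 2 + n·p·q·(p^{n−2} − q^{n−2})/(p^n − q^n). -/
/-!
Write `r = p / q` and `C` for the bracketed coefficient, so `Π_i = -C (rⁱ - 1) + rⁱ⁻¹`.
Summing the geometric series, `Π_1 + ⋯ + Π_{n-1} = 1 + n C` exactly because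
`C (rⁿ - 1) = r (rⁿ⁻² - 1)`; and clearing `qⁿ` from numerator and denominator of `C` gives
`C = p q (pⁿ⁻² - qⁿ⁻²) / (pⁿ - qⁿ)`.
-/

open Finset

theorem sum_range_neg_mul_pow_succ_sub_one_add_pow {K : Type*} [Field K] {r C : K} (hr : r ≠ 1)
    {n : ℕ} (hn : 2 ≤ n) (hC : C * (r ^ n - 1) = r * (r ^ (n - 2) - 1)) :
    ∑ j ∈ range (n - 1), (-C * (r ^ (j + 1) - 1) + r ^ j) = 1 + n * C := by
  obtain ⟨m, rfl⟩ : ∃ m, n = m + 2 := ⟨n - 2, by omega⟩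
  simp only [Nat.add_sub_cancel, show m + 2 - 1 = m + 1 by omega] at hC ⊢
  have hgeom := geom_sum_mul r (m + 1)
  simp only [sum_add_distrib, ← mul_sum, sum_sub_distrib, pow_succ, ← sum_mul, sum_const,
    card_range, nsmul_eq_mul] at hgeom ⊢
  refine mul_right_cancel₀ (sub_ne_zero.2 hr) ?_
  push_cast
  linear_combination (1 - C * r) * hgeom - hC

theorem div_mul_div_pow_sub_one_div_div_pow_sub_one {K : Type*} [Field K] {p q : K} (hq : q ≠ 0)
    {n : ℕ} (hn : 2 ≤ n) :
    p / q * ((p / q) ^ (n - 2) - 1) / ((p / q) ^ n - 1)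
      = p * q * (p ^ (n - 2) - q ^ (n - 2)) / (p ^ n - q ^ n) := by
  obtain ⟨m, rfl⟩ : ∃ m, n = m + 2 := ⟨n - 2, by omega⟩
  simp only [Nat.add_sub_cancel, div_pow, div_sub_one (pow_ne_zero _ hq)]
  field_simp
  ring

/-- closed form for the sum of the stationary-distribution weights
`Π_i` in Example 3 (`p₀ = q`). -/
theorem sum_Pi_example3 (n : ℕ) (hn : 3 ≤ n) (p : ℝ)
    (hp : p ∈ Set.Ioo (0:ℝ) 1) (hphalf : p ≠ 1/2)
    (q : ℝ) (hq : q = 1 - p)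
    (Pi : ℕ → ℝ) (hPi0 : Pi 0 = 1)
    (hPi : ∀ i, 1 ≤ i → i ≤ n - 1 →
      Pi i = -((p/q) * ((p/q)^(n-2) - 1) / ((p/q)^n - 1)) * ((p/q)^i - 1)
              + (p/q)^(i-1)) :
    ∑ i ∈ Finset.range n, Pi i
      = 2 + n * p * q * (p^(n-2) - q^(n-2)) / (p^n - q^n) := by
  obtain ⟨hp0, hp1⟩ := hp
  have hq0 : 0 < q := by linarith
  set r := p / q
  have hr1 : r ≠ 1 := fun h => hphalf (by rw [div_eq_one_iff_eq hq0.ne'] at h; linarith)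
  have hrn : r ^ n ≠ 1 := by
    rwa [Ne, pow_eq_one_iff_of_nonneg (div_pos hp0 hq0).le (by omega)]
  have hC := div_mul_cancel₀ (r * (r ^ (n - 2) - 1)) (sub_ne_zero.2 hrn)
  rw [← Nat.sub_add_cancel (by omega : 1 ≤ n), sum_range_succ', hPi0,
    sum_congr rfl fun j hj => hPi (j + 1) (by omega) (by have := mem_range.1 hj; omega)]
  simp only [Nat.add_sub_cancel, Nat.sub_add_cancel (by omega : 1 ≤ n)]
  rw [sum_range_neg_mul_pow_succ_sub_one_add_pow hr1 (by omega) hC]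
  linear_combination
    (n : ℝ) * div_mul_div_pow_sub_one_div_div_pow_sub_one (p := p) hq0.ne' (by omega : 2 ≤ n)
end

section
/- Define μ(r, γ) := r·γ·(1−γ)·(2−γ)·((2−γ)^{r−2} − γ^{r−2}) / (2·((2−γ)^r − γ^r) + r·γ·(2−γ)·((2−γ)^{r−2} − γ^{r−2})) for integers r ≥ 3 and γ ∈ (0,1). With γ_r := 2/√r, one has (1 − μ(r, γ_r))·√r / 4 → 1 as r → ∞; equivalently, 1 − μ(r, γ_r) is asymptotic to 4/√r = 2γ_r. -/
/-!
Put `t = (γ / (2 - γ)) ^ (r - 2)`. Dividing numerator and denominator of `μ(r, γ)` by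
`(2 - γ) ^ (r - 2)` gives
`1 - μ(r, γ) = (2U + rγ²V) / (2U + rγV)` with `U = (2 - γ)² - γ²t` and `V = (2 - γ)(1 - t)`.
At `γ = 2/√r` we have `rγ² = 4` and `rγ = 2√r`, so `(1 - μ) √r / 4 = (2U + 4V) / (4(γU + 2V))`,
a continuous function of `(γ, t)` with value `16 / 16 = 1` at `(0, 0)`; and `γ → 0`, `t → 0`
because `t ≤ γ / (2 - γ)` once `r ≥ 3`.
-/

open Filter Topology

theorem tendsto_pow_nhds_zero_of_tendsto {ι R : Type*} [SeminormedRing R] {l : Filter ι}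
    {x : ι → R} {k : ι → ℕ} (hx : Tendsto x l (𝓝 0)) (hk : ∀ᶠ i in l, k i ≠ 0) :
    Tendsto (fun i => x i ^ k i) l (𝓝 0) := by
  rw [tendsto_zero_iff_norm_tendsto_zero] at hx
  refine squeeze_zero_norm' ?_ hx
  filter_upwards [hk, hx.eventually (ge_mem_nhds zero_lt_one)] with i hki hxi
  calc ‖x i ^ k i‖ ≤ ‖x i‖ ^ k i := norm_pow_le' _ (Nat.pos_of_ne_zero hki)
    _ ≤ ‖x i‖ := pow_le_of_le_one (norm_nonneg _) hxi hki

noncomputable section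

def randomMixtureRate (r : ℕ) (γ : ℝ) : ℝ :=
  r * γ * (1-γ) * (2-γ) * ((2-γ)^(r-2) - γ^(r-2))
    / (2*((2-γ)^r - γ^r) + r * γ * (2-γ) * ((2-γ)^(r-2) - γ^(r-2)))

def tailRatio (r : ℕ) (γ : ℝ) : ℝ := (γ / (2 - γ)) ^ (r - 2)

def rescaledGap (γ t : ℝ) : ℝ :=
  (2 * ((2 - γ) ^ 2 - γ ^ 2 * t) + 4 * ((2 - γ) * (1 - t)))
    / (4 * (γ * ((2 - γ) ^ 2 - γ ^ 2 * t) + 2 * ((2 - γ) * (1 - t))))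

end

theorem tailRatio_nonneg {r : ℕ} {γ : ℝ} (hγ0 : 0 ≤ γ) (hγ2 : γ ≤ 2) : 0 ≤ tailRatio r γ :=
  pow_nonneg (div_nonneg hγ0 (by linarith)) _

theorem tailRatio_le_one {r : ℕ} {γ : ℝ} (hγ0 : 0 ≤ γ) (hγ1 : γ ≤ 1) : tailRatio r γ ≤ 1 :=
  pow_le_one₀ (div_nonneg hγ0 (by linarith)) ((div_le_one (by linarith)).2 (by linarith))

theorem tendsto_tailRatio {ι : Type*} {l : Filter ι} {r : ι → ℕ} {γ : ι → ℝ}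
    (hr : ∀ᶠ i in l, 3 ≤ r i) (hγ : Tendsto γ l (𝓝 0)) :
    Tendsto (fun i => tailRatio (r i) (γ i)) l (𝓝 0) := by
  have hratio : Tendsto (fun i => γ i / (2 - γ i)) l (𝓝 0) := by
    rw [show (0 : ℝ) = 0 / (2 - 0) by norm_num]
    exact hγ.div (tendsto_const_nhds.sub hγ) (by norm_num)
  exact tendsto_pow_nhds_zero_of_tendsto hratio (hr.mono fun i hi => by omega)

theorem one_sub_randomMixtureRate {r : ℕ} (hr : 2 ≤ r) {γ : ℝ} (hγ0 : 0 ≤ γ) (hγ1 : γ < 1) :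
    1 - randomMixtureRate r γ =
      (2 * ((2 - γ) ^ 2 - γ ^ 2 * tailRatio r γ) + r * γ ^ 2 * ((2 - γ) * (1 - tailRatio r γ)))
        / (2 * ((2 - γ) ^ 2 - γ ^ 2 * tailRatio r γ)
          + r * γ * ((2 - γ) * (1 - tailRatio r γ))) := by
  obtain ⟨m, rfl⟩ := Nat.exists_eq_add_of_le' hr
  have ht0 := tailRatio_nonneg (r := m + 2) hγ0 (by linarith)
  have ht1 := tailRatio_le_one (r := m + 2) hγ0 hγ1.le
  set t := tailRatio (m + 2) γ with ht
  have ha : 0 < 2 - γ := by linarith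
  have hpow : γ ^ m = t * (2 - γ) ^ m := by
    rw [ht, tailRatio, Nat.add_sub_cancel, div_pow, div_mul_cancel₀ _ (pow_ne_zero _ ha.ne')]
  have hU : 0 < (2 - γ) ^ 2 - γ ^ 2 * t := by nlinarith
  have hden : 0 < 2 * ((2 - γ) ^ 2 - γ ^ 2 * t) + (m + 2 : ℕ) * γ * ((2 - γ) * (1 - t)) := by
    positivity
  have hfactor :
      2 * ((2 - γ) ^ (m + 2) - γ ^ (m + 2)) + (m + 2 : ℕ) * γ * (2 - γ) * ((2 - γ) ^ m - γ ^ m)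
        = (2 - γ) ^ m * (2 * ((2 - γ) ^ 2 - γ ^ 2 * t) + (m + 2 : ℕ) * γ * ((2 - γ) * (1 - t))) := by
    rw [pow_add, pow_add, hpow]
    ring
  rw [randomMixtureRate, Nat.add_sub_cancel, hfactor, one_sub_div (by positivity),
    div_eq_div_iff (by positivity) hden.ne', hpow]
  ring

theorem one_sub_randomMixtureRate_mul_sqrt_div_four {r : ℕ} (hr : 4 < r) :
    (1 - randomMixtureRate r (2 / √r)) * √r / 4 = rescaledGap (2 / √r) (tailRatio r (2 / √r)) := by
  set s := √(r : ℝ) with hs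
  have hss : s * s = r := Real.mul_self_sqrt (Nat.cast_nonneg r)
  have hs2 : 2 < s := by
    rw [hs, Real.lt_sqrt zero_le_two]
    exact_mod_cast (by omega : 2 ^ 2 < r)
  have hγ0 : 0 < 2 / s := by positivity
  have hγ1 : 2 / s < 1 := (div_lt_one (by positivity)).2 hs2
  have hsγ : s * (2 / s) = 2 := mul_div_cancel₀ _ (by positivity)
  rw [one_sub_randomMixtureRate (by omega) hγ0.le hγ1, rescaledGap,
    ← mul_div_mul_right _ (4 * _) (by positivity : s ≠ 0), div_mul_eq_mul_div, div_div, ← hss]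
  set γ := 2 / s
  set t := tailRatio r γ
  clear_value γ t
  congr 1
  · linear_combination (s * γ + 2) * ((2 - γ) * (1 - t)) * s * hsγ
  · linear_combination (4 * s * ((2 - γ) * (1 - t)) - 4 * ((2 - γ) ^ 2 - γ ^ 2 * t)) * hsγ

theorem tendsto_rescaledGap : Tendsto (Function.uncurry rescaledGap) (𝓝 (0, 0)) (𝓝 1) := by
  have : ContinuousAt (Function.uncurry rescaledGap) (0, 0) := by
    unfold rescaledGap Function.uncurry
    fun_prop (disch := norm_num)
  convert this.tendsto
  norm_num [rescaledGap]

/-- with `γ_r = 2/√r`, `1 − μ(r, γ_r)` is asymptotic to `4/√r = 2γ_r`. -/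
theorem rate_random_asymp
    (μ : ℕ → ℝ → ℝ)
    (hμ : ∀ (r : ℕ) (γ : ℝ), μ r γ =
      r * γ * (1-γ) * (2-γ) * ((2-γ)^(r-2) - γ^(r-2))
        / (2*((2-γ)^r - γ^r) + r * γ * (2-γ) * ((2-γ)^(r-2) - γ^(r-2)))) :
    Tendsto (fun r : ℕ => (1 - μ r (2 / Real.sqrt r)) * Real.sqrt r / 4)
      atTop (nhds 1) := by
  obtain rfl : μ = randomMixtureRate := funext₂ hμ
  have hγ : Tendsto (fun r : ℕ => 2 / √(r : ℝ)) atTop (𝓝 0) :=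
    tendsto_const_nhds.div_atTop (Real.tendsto_sqrt_atTop.comp tendsto_natCast_atTop_atTop)
  have ht : Tendsto (fun r : ℕ => tailRatio r (2 / √(r : ℝ))) atTop (𝓝 0) :=
    tendsto_tailRatio (eventually_ge_atTop 3) hγ
  refine (tendsto_rescaledGap.comp (hγ.prodMk_nhds ht)).congr' ?_
  filter_upwards [eventually_gt_atTop 4] with r hr
  exact (one_sub_randomMixtureRate_mul_sqrt_div_four hr).symm
end

section
/- Define μ(r, γ) := r·γ·(1−γ)·(2−γ)·((2−γ)^{r−2} − γ^{r−2}) / (2·((2−γ)^r − γ^r) + r·γ·(2−γ)·((2−γ)^{r−2} − γ^{r−2})). Then sup over integers r ≥ 3 and γ ∈ (0,1) of μ(r, γ) equals 1. -/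
/-!
The denominator exceeds the numerator by `2((2-γ)^r - γ^r) + rγ²(2-γ)((2-γ)^(r-2) - γ^(r-2)) ≥ 0`,
so every rate is at most `1`. Dividing numerator and denominator by `r (2-γ)^(r-2)` leaves only
`1/r` and `(γ/(2-γ))^(r-2)`, both tending to `0`, so for fixed `γ` the rate tends to `1 - γ` as
`r → ∞`. Hence the closure of the set of rates contains `(0, 1)`, and `1` is its least upper bound.
-/

open Filter Topology

noncomputable def randomRate (r : ℕ) (γ : ℝ) : ℝ :=
  r * γ * (1-γ) * (2-γ) * ((2-γ)^(r-2) - γ^(r-2))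
    / (2*((2-γ)^r - γ^r) + r * γ * (2-γ) * ((2-γ)^(r-2) - γ^(r-2)))

lemma randomRate_le_one (r : ℕ) {γ : ℝ} (hγ0 : 0 ≤ γ) (hγ1 : γ ≤ 1) :
    randomRate r γ ≤ 1 := by
  have hγa : γ ≤ 2 - γ := by linarith
  have hΔ : 0 ≤ (2-γ)^(r-2) - γ^(r-2) := sub_nonneg.2 (pow_le_pow_left₀ hγ0 hγa _)
  have hP : 0 ≤ (2-γ)^r - γ^r := sub_nonneg.2 (pow_le_pow_left₀ hγ0 hγa _)
  have hT : 0 ≤ r * γ * (2-γ) * ((2-γ)^(r-2) - γ^(r-2)) := by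
    have : 0 ≤ 2 - γ := by linarith
    positivity
  apply div_le_one_of_le₀ _ (by positivity)
  nlinarith [mul_nonneg hγ0 hT]

lemma randomRate_eq_of_two_le {r : ℕ} (hr : 2 ≤ r) {γ : ℝ} (hγ : γ ≠ 2) :
    randomRate r γ =
      γ * (1-γ) * (2-γ) * (1 - (γ/(2-γ))^(r-2)) /
        (2 * ((2-γ)^2 - γ^2 * (γ/(2-γ))^(r-2)) / r + γ * (2-γ) * (1 - (γ/(2-γ))^(r-2))) := by
  obtain ⟨k, rfl⟩ := Nat.exists_eq_add_of_le' hr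
  have ha : (2:ℝ) - γ ≠ 0 := sub_ne_zero.2 (Ne.symm hγ)
  have hc : ((k + 2 : ℕ) : ℝ) * (2-γ)^k ≠ 0 := by positivity
  symm
  rw [← mul_div_mul_left _ _ hc, randomRate, Nat.add_sub_cancel, div_pow]
  congr 1
  · field_simp
  · field_simp
    ring

lemma tendsto_randomRate_atTop {γ : ℝ} (hγ0 : 0 < γ) (hγ1 : γ < 1) :
    Tendsto (fun r => randomRate r γ) atTop (𝓝 (1 - γ)) := by
  have ha : 0 < 2 - γ := by linarith
  have hgeom : Tendsto (fun r : ℕ => (γ/(2-γ))^(r-2)) atTop (𝓝 0) :=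
    (tendsto_pow_atTop_nhds_zero_of_lt_one (div_pos hγ0 ha).le
      ((div_lt_one ha).2 (by linarith))).comp (tendsto_sub_atTop_nat 2)
  have hlim : Tendsto (fun r : ℕ => γ * (1-γ) * (2-γ) * (1 - (γ/(2-γ))^(r-2)) /
      (2 * ((2-γ)^2 - γ^2 * (γ/(2-γ))^(r-2)) / r + γ * (2-γ) * (1 - (γ/(2-γ))^(r-2))))
      atTop (𝓝 (γ * (1-γ) * (2-γ) * (1 - 0) / (0 + γ * (2-γ) * (1 - 0)))) :=
    ((tendsto_const_nhds.sub hgeom).const_mul _).div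
      ((((tendsto_const_nhds.sub (hgeom.const_mul _)).const_mul 2).div_atTop
        tendsto_natCast_atTop_atTop).add ((tendsto_const_nhds.sub hgeom).const_mul _))
      (by positivity)
  rw [show γ * (1-γ) * (2-γ) * (1 - 0) / (0 + γ * (2-γ) * (1 - 0)) = 1 - γ by
    simp only [sub_zero, zero_add, mul_one]; field_simp] at hlim
  refine hlim.congr' (eventually_atTop.2 ⟨2, fun r hr => ?_⟩)
  exact (randomRate_eq_of_two_le hr (by linarith)).symm

/-- the supremum over `r ≥ 3` and `γ ∈ (0,1)` of the rate of profit
`μ(r, 0, γA+(1−γ)B)` equals 1. -/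
theorem sup_rate_random_eq_one
    (μ : ℕ → ℝ → ℝ)
    (hμ : ∀ (r : ℕ) (γ : ℝ), μ r γ =
      r * γ * (1-γ) * (2-γ) * ((2-γ)^(r-2) - γ^(r-2))
        / (2*((2-γ)^r - γ^r) + r * γ * (2-γ) * ((2-γ)^(r-2) - γ^(r-2)))) :
    IsLUB {x : ℝ | ∃ r : ℕ, 3 ≤ r ∧ ∃ γ ∈ Set.Ioo (0:ℝ) 1, x = μ r γ} 1 := by
  obtain rfl : μ = randomRate := funext fun r => funext (hμ r)
  set S := {x : ℝ | ∃ r : ℕ, 3 ≤ r ∧ ∃ γ ∈ Set.Ioo (0:ℝ) 1, x = randomRate r γ}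
  have hupper : 1 ∈ upperBounds S := by
    rintro x ⟨r, -, γ, hγ, rfl⟩
    exact randomRate_le_one r hγ.1.le hγ.2.le
  have hclosure : Set.Ioo 0 1 ⊆ closure S := by
    intro x hx
    have hγ : 1 - x ∈ Set.Ioo (0:ℝ) 1 := ⟨by linarith [hx.2], by linarith [hx.1]⟩
    have hlim := tendsto_randomRate_atTop hγ.1 hγ.2
    rw [sub_sub_cancel] at hlim
    exact mem_closure_of_tendsto hlim (eventually_atTop.2 ⟨3, fun r hr => ⟨r, hr, _, hγ, rfl⟩⟩)
  refine ⟨hupper, fun b hb => ?_⟩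
  rw [← upperBounds_closure] at hb
  exact (isLUB_Ioo zero_lt_one).2 (upperBounds_mono_set hclosure hb)
end

section
/- Let P be an irreducible, period-2 stochastic matrix on finite Σ with cyclic classes Σ₁ and Σ₂, stationary distribution π of P, and stationary distributions π₁, π₂ of P² on Σ₁, Σ₂. Define S₁ := {(i,j) ∈ Σ₁×Σ₂ : P(i,j) > 0} and the bivariate chain on S₁ with transition probabilities P*((i,j),(k,l)) := P(j,k)·P(k,l). Then the probability measure π₁* on S₁ defined by π₁*(i,j) := π₁(i)·P(i,j) is a stationary distribution of P*. -/
open Finset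

/-- The law of the edge `(X₀, X₁)` of a chain with kernel `P` started from `μ`. -/
def edgeMeasure {S R : Type*} [Mul R] (μ : S → R) (P : Matrix S S R) : S × S → R :=
  fun x => μ x.1 * P x.1 x.2

/-- The kernel moving the edge `(X₀, X₁)` to `(X₂, X₃)`. -/
def bivariateKernel {S R : Type*} [Mul R] (P : Matrix S S R) : S × S → S × S → R :=
  fun x y => P x.2 y.1 * P y.1 y.2

section Algebra

variable {S R : Type*} [Fintype S] [CommSemiring R] (μ : S → R) (P : Matrix S S R)

theorem sum_edgeMeasure (hrow : ∀ i, ∑ j, P i j = 1) :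
    ∑ x, edgeMeasure μ P x = ∑ i, μ i := by
  simp only [edgeMeasure, Fintype.sum_prod_type, ← mul_sum, hrow, mul_one]

theorem sum_edgeMeasure_mul_bivariateKernel [DecidableEq S] (y : S × S) :
    ∑ x, edgeMeasure μ P x * bivariateKernel P x y = (∑ i, μ i * (P ^ 2) i y.1) * P y.1 y.2 := by
  simp only [edgeMeasure, bivariateKernel, Fintype.sum_prod_type, sum_mul, pow_two,
    Matrix.mul_apply, mul_sum]
  exact sum_congr rfl fun i _ => sum_congr rfl fun j _ => by ring

theorem edgeMeasure_stationary [DecidableEq S] (hμ : ∀ j, ∑ i, μ i * (P ^ 2) i j = μ j)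
    (y : S × S) : ∑ x, edgeMeasure μ P x * bivariateKernel P x y = edgeMeasure μ P y := by
  rw [sum_edgeMeasure_mul_bivariateKernel, hμ]
  rfl

end Algebra

section Order

variable {S : Type*} {μ : S → ℝ} {P : Matrix S S ℝ}

theorem edgeMeasure_nonneg (hμ : ∀ i, 0 ≤ μ i) (hP : ∀ i j, 0 ≤ P i j) (x : S × S) :
    0 ≤ edgeMeasure μ P x :=
  mul_nonneg (hμ _) (hP _ _)

theorem edgeMeasure_eq_zero_of_not_mem {C₁ C₂ : Finset S} (hP : ∀ i j, 0 ≤ P i j)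
    (hdisj : Disjoint C₁ C₂)
    (halt : ∀ i j, 0 < P i j → (i ∈ C₁ ∧ j ∈ C₂) ∨ (i ∈ C₂ ∧ j ∈ C₁))
    (hμ : ∀ i, i ∉ C₁ → μ i = 0) (x : S × S)
    (hx : ¬(x.1 ∈ C₁ ∧ x.2 ∈ C₂ ∧ 0 < P x.1 x.2)) : edgeMeasure μ P x = 0 := by
  obtain ⟨i, j⟩ := x
  by_cases hi : i ∈ C₁
  · obtain hzero | hpos := (hP i j).eq_or_lt
    · simp [edgeMeasure, ← hzero]
    · rcases halt i j hpos with ⟨-, hj⟩ | ⟨hi₂, -⟩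
      · exact absurd ⟨hi, hj, hpos⟩ hx
      · exact absurd hi₂ (disjoint_left.mp hdisj hi)
  · simp [edgeMeasure, hμ i hi]

end Order

theorem bivariate_stationary_general {S : Type*} [Fintype S] [DecidableEq S]
    (P : Matrix S S ℝ)
    (hnonneg : ∀ i j, 0 ≤ P i j) (hrow : ∀ i, ∑ j, P i j = 1)
    (C₁ C₂ : Finset S) (hdisj : Disjoint C₁ C₂)
    (halt : ∀ i j, 0 < P i j → (i ∈ C₁ ∧ j ∈ C₂) ∨ (i ∈ C₂ ∧ j ∈ C₁))
    (π₁ : S → ℝ)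
    (hπ₁nonneg : ∀ i, 0 ≤ π₁ i) (hπ₁sum : ∑ i, π₁ i = 1)
    (hπ₁stat : ∀ j, ∑ i, π₁ i * (P ^ 2) i j = π₁ j)
    (hπ₁supp : ∀ i, i ∉ C₁ → π₁ i = 0)
    (Pstar : S × S → S × S → ℝ)
    (hPstar : ∀ x y, Pstar x y = P x.2 y.1 * P y.1 y.2)
    (ν : S × S → ℝ) (hν : ∀ x, ν x = π₁ x.1 * P x.1 x.2) :
    (∀ x, 0 ≤ ν x) ∧ (∑ x, ν x) = 1
    ∧ (∀ x : S × S, ¬(x.1 ∈ C₁ ∧ x.2 ∈ C₂ ∧ 0 < P x.1 x.2) → ν x = 0)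
    ∧ ∀ y : S × S, ∑ x, ν x * Pstar x y = ν y := by
  obtain rfl : ν = edgeMeasure π₁ P := funext hν
  obtain rfl : Pstar = bivariateKernel P := funext₂ hPstar
  exact ⟨edgeMeasure_nonneg hπ₁nonneg hnonneg, (sum_edgeMeasure π₁ P hrow).trans hπ₁sum,
    edgeMeasure_eq_zero_of_not_mem hnonneg hdisj halt hπ₁supp,
    edgeMeasure_stationary π₁ P hπ₁stat⟩

/-- the measure `π₁*(i,j) = π₁(i)P(i,j)` is a stationary
distribution of the bivariate chain `P*((i,j),(k,l)) = P(j,k)P(k,l)`.  It is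
supported on `S₁ = {(i,j) ∈ C₁×C₂ : P(i,j) > 0}`. -/
theorem bivariate_stationary {S : Type*} [Fintype S] [DecidableEq S]
    (P : Matrix S S ℝ)
    (hnonneg : ∀ i j, 0 ≤ P i j) (hrow : ∀ i, ∑ j, P i j = 1)
    (hirr : ∀ i j, ∃ m, 1 ≤ m ∧ 0 < (P ^ m) i j)
    (hper : ∀ (i : S) (d : ℕ), (∀ m, 1 ≤ m → 0 < (P ^ m) i i → d ∣ m) ↔ d ∣ 2)
    (C₁ C₂ : Finset S) (hdisj : Disjoint C₁ C₂) (hcover : C₁ ∪ C₂ = Finset.univ)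
    (halt : ∀ i j, 0 < P i j → (i ∈ C₁ ∧ j ∈ C₂) ∨ (i ∈ C₂ ∧ j ∈ C₁))
    (π π₁ π₂ : S → ℝ)
    (hπnonneg : ∀ i, 0 ≤ π i) (hπsum : ∑ i, π i = 1)
    (hπstat : ∀ j, ∑ i, π i * P i j = π j)
    (hπ₁nonneg : ∀ i, 0 ≤ π₁ i) (hπ₁sum : ∑ i, π₁ i = 1)
    (hπ₁stat : ∀ j, ∑ i, π₁ i * (P ^ 2) i j = π₁ j)
    (hπ₁supp : ∀ i, i ∉ C₁ → π₁ i = 0)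
    (hπ₂nonneg : ∀ i, 0 ≤ π₂ i) (hπ₂sum : ∑ i, π₂ i = 1)
    (hπ₂stat : ∀ j, ∑ i, π₂ i * (P ^ 2) i j = π₂ j)
    (hπ₂supp : ∀ i, i ∉ C₂ → π₂ i = 0)
    (Pstar : S × S → S × S → ℝ)
    (hPstar : ∀ x y, Pstar x y = P x.2 y.1 * P y.1 y.2)
    (ν : S × S → ℝ) (hν : ∀ x, ν x = π₁ x.1 * P x.1 x.2) :
    (∀ x, 0 ≤ ν x) ∧ (∑ x, ν x) = 1
    ∧ (∀ x : S × S, ¬(x.1 ∈ C₁ ∧ x.2 ∈ C₂ ∧ 0 < P x.1 x.2) → ν x = 0)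
    ∧ ∀ y : S × S, ∑ x, ν x * Pstar x y = ν y :=
  bivariate_stationary_general P hnonneg hrow C₁ C₂ hdisj halt π₁ hπ₁nonneg hπ₁sum hπ₁stat hπ₁supp
    Pstar hPstar ν hν
end

section
/- In the setting of the previous bivariate chain: the transition matrix P* on S₁ := {(i,j) ∈ Σ₁×Σ₂ : P(i,j) > 0} given by P*((i,j),(k,l)) := P(j,k)·P(k,l) is irreducible and aperiodic. -/
/-!
A `P*`-step from `(i, j)` to `(k, l)` is a `P`-path `j → k → l`, so
`(P*)^(m+1) ((i, j), (k, l)) = P^(2m+1) (j, k) · P (k, l)`. Since `P` alternates between the two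
classes, every `P`-path from `C₂` to `C₁` has odd length, and irreducibility of `P` gives one
between any two states: this is irreducibility of `P*`. For aperiodicity, let `d` divide every
return time of `P*` at `(i, j)` and fix a path `j → i` of length `2k + 1`. Then `d ∣ k + 1`, and
prefixing a loop of length `2s` at `j` gives `d ∣ s + k + 1`, so `2d` divides every return time of
`P` at `j`. As `P` has period `2`, `2d ∣ 2`, i.e. `d = 1`.
-/

namespace Matrix

section Positivity

variable {n R : Type*} [Fintype n] [DecidableEq n] [Semiring R] [LinearOrder R]
  [IsStrictOrderedRing R] {P : Matrix n n R}

theorem pow_add_apply_pos (hP : ∀ i j, 0 ≤ P i j) {a b : ℕ} {i k j : n}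
    (ha : 0 < (P ^ a) i k) (hb : 0 < (P ^ b) k j) : 0 < (P ^ (a + b)) i j := by
  rw [pow_add, mul_apply]
  exact (Finset.sum_pos_iff_of_nonneg fun l _ =>
    mul_nonneg (pow_apply_nonneg hP a i l) (pow_apply_nonneg hP b l j)).2
    ⟨k, Finset.mem_univ k, mul_pos ha hb⟩

theorem exists_pos_of_pow_succ_apply_pos (hP : ∀ i j, 0 ≤ P i j) {m : ℕ} {i j : n}
    (h : 0 < (P ^ (m + 1)) i j) : ∃ k, 0 < (P ^ m) i k ∧ 0 < P k j := by
  rw [pow_succ, mul_apply] at h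
  obtain ⟨k, -, hk⟩ := (Finset.sum_pos_iff_of_nonneg fun l _ =>
    mul_nonneg (pow_apply_nonneg hP m i l) (hP l j)).1 h
  exact ⟨k, pos_of_mul_pos_left hk (hP k j), pos_of_mul_pos_right hk (pow_apply_nonneg hP m i k)⟩

variable {A B : Finset n}

theorem mem_of_pow_apply_pos_of_alternating (hP : ∀ i j, 0 ≤ P i j) (hdisj : Disjoint A B)
    (halt : ∀ i j, 0 < P i j → (i ∈ A ∧ j ∈ B) ∨ (i ∈ B ∧ j ∈ A)) {m : ℕ} {i j : n}
    (hi : i ∈ A) (h : 0 < (P ^ m) i j) : j ∈ if Even m then A else B := by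
  induction m generalizing j with
  | zero =>
    obtain rfl : i = j := by
      by_contra hne
      simp [one_apply_ne hne] at h
    simpa using hi
  | succ m ih =>
    obtain ⟨k, hik, hkj⟩ := exists_pos_of_pow_succ_apply_pos hP h
    have hk := ih hik
    rcases halt k j hkj with ⟨hkA, hj⟩ | ⟨hkB, hj⟩ <;> by_cases hm : Even m <;>
      simp_all [Nat.even_add_one, Finset.disjoint_left]

theorem odd_of_pow_apply_pos_of_alternating (hP : ∀ i j, 0 ≤ P i j) (hdisj : Disjoint A B)
    (halt : ∀ i j, 0 < P i j → (i ∈ A ∧ j ∈ B) ∨ (i ∈ B ∧ j ∈ A)) {m : ℕ} {i j : n}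
    (hi : i ∈ A) (hj : j ∈ B) (h : 0 < (P ^ m) i j) : Odd m := by
  rw [← Nat.not_even_iff_odd]
  intro hm
  have hjA : j ∈ A := by simpa [hm] using mem_of_pow_apply_pos_of_alternating hP hdisj halt hi h
  exact Finset.disjoint_left.mp hdisj hjA hj

theorem dvd_of_dvd_forall_odd_pow_apply_pos (hP : ∀ i j, 0 ≤ P i j) {i j : n} {d k s : ℕ}
    (hd : ∀ m, 0 < (P ^ (2 * m + 1)) j i → d ∣ m + 1) (hk : 0 < (P ^ (2 * k + 1)) j i)
    (hs : 0 < (P ^ (2 * s)) j j) : d ∣ s := by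
  have hsk : 0 < (P ^ (2 * (s + k) + 1)) j i := by
    simpa only [show 2 * s + (2 * k + 1) = 2 * (s + k) + 1 by ring] using
      pow_add_apply_pos hP hs hk
  exact (Nat.dvd_add_left (hd k hk)).mp (by simpa only [add_assoc] using hd (s + k) hsk)

end Positivity

section Bivariate

variable {n R : Type*} [Fintype n] [DecidableEq n] [CommSemiring R]

/-- The chain of consecutive pairs `(X_{2t-1}, X_{2t})` of a chain with transition matrix `P`. -/
def bivariate (P : Matrix n n R) : Matrix (n × n) (n × n) R :=
  of fun x y => P x.2 y.1 * P y.1 y.2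

theorem bivariate_pow_succ_apply (P : Matrix n n R) (m : ℕ) (x y : n × n) :
    (bivariate P ^ (m + 1)) x y = (P ^ (2 * m + 1)) x.2 y.1 * P y.1 y.2 := by
  induction m generalizing y with
  | zero => simp [bivariate]
  | succ m ih =>
    rw [pow_succ, mul_apply, Fintype.sum_prod_type, Finset.sum_comm,
      show 2 * (m + 1) + 1 = 2 * m + 1 + 1 + 1 by ring, pow_succ P (2 * m + 1 + 1), mul_apply,
      Finset.sum_mul]
    refine Finset.sum_congr rfl fun b _ => ?_
    rw [pow_succ P (2 * m + 1), mul_apply, Finset.sum_mul, Finset.sum_mul]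
    refine Finset.sum_congr rfl fun a _ => ?_
    rw [ih]
    simp only [bivariate, of_apply]
    ring

end Bivariate

end Matrix

open Matrix

theorem bivariate_primitive_general {S : Type*} [Fintype S] [DecidableEq S]
    (P : Matrix S S ℝ)
    (hnonneg : ∀ i j, 0 ≤ P i j)
    (hirr : ∀ i j, ∃ m, 1 ≤ m ∧ 0 < (P ^ m) i j)
    (hper : ∀ (i : S) (d : ℕ), (∀ m, 1 ≤ m → 0 < (P ^ m) i i → d ∣ m) ↔ d ∣ 2)
    (C₁ C₂ : Finset S) (hdisj : Disjoint C₁ C₂)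
    (halt : ∀ i j, 0 < P i j → (i ∈ C₁ ∧ j ∈ C₂) ∨ (i ∈ C₂ ∧ j ∈ C₁))
    (Pstar : Matrix (S × S) (S × S) ℝ)
    (hPstar : ∀ x y, Pstar x y = P x.2 y.1 * P y.1 y.2) :
    (∀ x y : S × S, (x.1 ∈ C₁ ∧ x.2 ∈ C₂ ∧ 0 < P x.1 x.2) →
      (y.1 ∈ C₁ ∧ y.2 ∈ C₂ ∧ 0 < P y.1 y.2) →
      ∃ m, 1 ≤ m ∧ 0 < (Pstar ^ m) x y)
    ∧ ∀ x : S × S, (x.1 ∈ C₁ ∧ x.2 ∈ C₂ ∧ 0 < P x.1 x.2) →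
        ∀ d : ℕ, (∀ m, 1 ≤ m → 0 < (Pstar ^ m) x x → d ∣ m) → d ∣ 1 := by
  obtain rfl : Pstar = bivariate P := ext hPstar
  have odd_path : ∀ {i j : S} {m : ℕ}, i ∈ C₂ → j ∈ C₁ → 0 < (P ^ m) i j → Odd m :=
    odd_of_pow_apply_pos_of_alternating hnonneg hdisj.symm fun i j h => (halt i j h).symm
  refine ⟨?_, ?_⟩
  · rintro x y ⟨-, hx₂, -⟩ ⟨hy₁, -, hy⟩
    obtain ⟨m, -, hm⟩ := hirr x.2 y.1
    obtain ⟨k, rfl⟩ := odd_path hx₂ hy₁ hm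
    exact ⟨k + 1, by omega, by rw [bivariate_pow_succ_apply]; exact mul_pos hm hy⟩
  · rintro x ⟨hx₁, hx₂, hx⟩ d hd
    obtain ⟨m, -, hm⟩ := hirr x.2 x.1
    obtain ⟨k, rfl⟩ := odd_path hx₂ hx₁ hm
    have hd_odd : ∀ m, 0 < (P ^ (2 * m + 1)) x.2 x.1 → d ∣ m + 1 := fun m h =>
      hd (m + 1) (by omega) (by rw [bivariate_pow_succ_apply]; exact mul_pos h hx)
    have h2d : 2 * d ∣ 2 * 1 := (hper x.2 (2 * d)).mp fun r hr hpos => by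
      obtain ⟨s, rfl⟩ := (hper x.2 2).mpr dvd_rfl r hr hpos
      exact mul_dvd_mul_left 2 (dvd_of_dvd_forall_odd_pow_apply_pos hnonneg hd_odd hm hpos)
    exact Nat.dvd_of_mul_dvd_mul_left two_pos h2d

/-- the bivariate transition matrix
`P*((i,j),(k,l)) = P(j,k)P(k,l)` is irreducible and aperiodic on
`S₁ = {(i,j) ∈ C₁×C₂ : P(i,j) > 0}`. -/
theorem bivariate_primitive {S : Type*} [Fintype S] [DecidableEq S]
    (P : Matrix S S ℝ)
    (hnonneg : ∀ i j, 0 ≤ P i j) (hrow : ∀ i, ∑ j, P i j = 1)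
    (hirr : ∀ i j, ∃ m, 1 ≤ m ∧ 0 < (P ^ m) i j)
    (hper : ∀ (i : S) (d : ℕ), (∀ m, 1 ≤ m → 0 < (P ^ m) i i → d ∣ m) ↔ d ∣ 2)
    (C₁ C₂ : Finset S) (hdisj : Disjoint C₁ C₂) (hcover : C₁ ∪ C₂ = Finset.univ)
    (halt : ∀ i j, 0 < P i j → (i ∈ C₁ ∧ j ∈ C₂) ∨ (i ∈ C₂ ∧ j ∈ C₁))
    (Pstar : Matrix (S × S) (S × S) ℝ)
    (hPstar : ∀ x y, Pstar x y = P x.2 y.1 * P y.1 y.2) :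
    (∀ x y : S × S, (x.1 ∈ C₁ ∧ x.2 ∈ C₂ ∧ 0 < P x.1 x.2) →
      (y.1 ∈ C₁ ∧ y.2 ∈ C₂ ∧ 0 < P y.1 y.2) →
      ∃ m, 1 ≤ m ∧ 0 < (Pstar ^ m) x y)
    ∧ ∀ x : S × S, (x.1 ∈ C₁ ∧ x.2 ∈ C₂ ∧ 0 < P x.1 x.2) →
        ∀ d : ℕ, (∀ m, 1 ≤ m → 0 < (Pstar ^ m) x x → d ∣ m) → d ∣ 1 :=
  bivariate_primitive_general P hnonneg hirr hper C₁ C₂ hdisj halt Pstar hPstar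
end

section
/- For r = 3 and ρ ∈ (0,1), the rate of profit μ(3, ρ, ½A + ½B) is given as follows: with γ = 1/2, p := 1/4 + (1/2)·1/(1+ρ), p₀ := 1/4 + (1/2)·ρ²/(1+ρ²), q := 1−p, q₀ := 1−p₀, π₀ := [1 − (p₀−q₀)/(p−q) + 3(p₀p² − q₀q²)/(p³−q³)]^{−1}, the expression π₀(p₀−q₀) + (1−π₀)(p−q) equals 9(1−ρ)³(1+ρ) / (2(35 + 70ρ + 78ρ² + 70ρ³ + 35ρ⁴)). -/
/-- closed form for `μ(3, ρ, ½A + ½B)`. -/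
theorem rate_half_half_r3 (ρ : ℝ) (hρ : ρ ∈ Set.Ioo (0:ℝ) 1)
    (p p₀ q q₀ π₀ : ℝ)
    (hp : p = 1/4 + (1/2) * (1/(1+ρ)))
    (hp0 : p₀ = 1/4 + (1/2) * (ρ^2/(1+ρ^2)))
    (hq : q = 1 - p) (hq0 : q₀ = 1 - p₀)
    (hπ0 : π₀ = (1 - (p₀ - q₀)/(p - q) + 3*(p₀*p^2 - q₀*q^2)/(p^3 - q^3))⁻¹) :
    π₀*(p₀ - q₀) + (1 - π₀)*(p - q)
      = 9*(1-ρ)^3*(1+ρ) / (2*(35 + 70*ρ + 78*ρ^2 + 70*ρ^3 + 35*ρ^4)) := by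
  obtain ⟨h0, h1⟩ := hρ
  have ha : (0:ℝ) < 1 + ρ := by linarith
  have hb : (0:ℝ) < 1 + ρ^2 := by positivity
  have ha' := ha.ne'
  have hb' := hb.ne'
  have e1 : p - q = (1-ρ)/(2*(1+ρ)) := by
    rw [hq, hp]; field_simp; ring
  have e2 : p₀ - q₀ = (ρ^2-1)/(2*(1+ρ^2)) := by
    rw [hq0, hp0]; field_simp; ring
  have e3 : p^3 - q^3 = (1-ρ)*(13+22*ρ+13*ρ^2)/(32*(1+ρ)^3) := by
    rw [hq, hp]; field_simp; ring
  have e4 : p₀*p^2 - q₀*q^2 = 3*(1-ρ)^3/(32*(1+ρ)*(1+ρ^2)) := by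
    rw [hq0, hp0, hq, hp]; field_simp; ring
  have hc : (0:ℝ) < 13+22*ρ+13*ρ^2 := by nlinarith [sq_nonneg ρ]
  have hN : (0:ℝ) < 35 + 70*ρ + 78*ρ^2 + 70*ρ^3 + 35*ρ^4 := by
    nlinarith [pow_pos h0 2, pow_pos h0 3, pow_pos h0 4]
  have h1' : (0:ℝ) < 1 - ρ := by linarith
  have hpq : p - q ≠ 0 := by
    rw [e1]; exact (div_pos h1' (by linarith)).ne'
  have hc3 : p^3 - q^3 ≠ 0 := by
    rw [e3]; exact (div_pos (mul_pos h1' hc) (by positivity)).ne'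
  have hD : (1 - (p₀ - q₀)/(p - q) + 3*(p₀*p^2 - q₀*q^2)/(p^3 - q^3))
      = (35 + 70*ρ + 78*ρ^2 + 70*ρ^3 + 35*ρ^4)/((1+ρ^2)*(13+22*ρ+13*ρ^2)) := by
    rw [e1, e2, e3, e4]
    field_simp
    ring
  rw [hπ0, hD, e1, e2]
  field_simp
  ring
end

section
/- For each even integer r ≥ 4 define s_r := ⌊log₂ r⌋ − 1 and μ_r := (1 − 2(s_r−1)/(r+2(s_r−1)))·(1 − 2^{−s_r}). Then (1 − μ_r)·r / (2 s_r) → 1 as r → ∞ along even integers; i.e., 1 − μ_r is asymptotic to 2s_r/r = 2(⌊log₂ r⌋−1)/r. -/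
open Filter Topology

/-!
Clearing denominators,
`(1 - μ_r) r / (2 s_r) = ((s_r - 1) / s_r + 2^{-s_r} r / (2 s_r)) · r / (r + 2 (s_r - 1))`.
Since `2^{s_r + 1} ≤ r < 2^{s_r + 2}` for `r ≥ 2`, we have `s_r → ∞`, `s_r / r → 0` and
`2^{-s_r} r < 4`, so the two factors tend to `1 + 0` and `1`.
-/

theorem Nat.tendsto_log_atTop {b : ℕ} (hb : 1 < b) : Tendsto (Nat.log b) atTop atTop :=
  tendsto_atTop_atTop.2 fun n =>
    ⟨b ^ n, fun _ hr => (Nat.log_pow hb n).ge.trans (Nat.log_mono_right hr)⟩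

theorem Nat.lt_sq_mul_pow_log_sub_one {b : ℕ} (hb : 1 < b) (r : ℕ) :
    r < b ^ 2 * b ^ (Nat.log b r - 1) :=
  calc r < b ^ (Nat.log b r + 1) := Nat.lt_pow_succ_log_self hb r
    _ ≤ b ^ (Nat.log b r - 1 + 2) := Nat.pow_le_pow_right (by omega) (by omega)
    _ = b ^ 2 * b ^ (Nat.log b r - 1) := by rw [pow_add, mul_comm]

theorem Nat.pow_log_sub_one_le {b r : ℕ} (hb : 0 < b) (hr : r ≠ 0) :
    b ^ (Nat.log b r - 1) ≤ r :=
  (Nat.pow_le_pow_right hb (Nat.sub_le _ _)).trans (Nat.pow_log_le_self b hr)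

theorem one_sub_rate_mul_div_eq {x t q : ℝ} (hx : x + 2 * (t - 1) ≠ 0) (ht : t ≠ 0) :
    (1 - (1 - 2 * (t - 1) / (x + 2 * (t - 1))) * (1 - q)) * x / (2 * t) =
      ((t - 1) / t + q * x / (2 * t)) * (x / (x + 2 * (t - 1))) := by
  field_simp
  ring

section Asymptotics

variable {α : Type*} {l : Filter α} {x t q : α → ℝ}

theorem tendsto_div_add_two_mul_sub_one (ht : Tendsto t l atTop) (hx : ∀ᶠ a in l, x a ≠ 0)
    (htx : Tendsto (fun a => t a / x a) l (𝓝 0)) :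
    Tendsto (fun a => x a / (x a + 2 * (t a - 1))) l (𝓝 1) := by
  have hlim : Tendsto (fun a => (1 + 2 * (t a / x a) * (1 - (t a)⁻¹))⁻¹) l (𝓝 1) := by
    have hden : Tendsto (fun a => 1 + 2 * (t a / x a) * (1 - (t a)⁻¹)) l
        (𝓝 (1 + 2 * 0 * (1 - 0))) :=
      tendsto_const_nhds.add ((htx.const_mul 2).mul (tendsto_const_nhds.sub ht.inv_tendsto_atTop))
    simpa using hden.inv₀ (by norm_num : (1 + 2 * 0 * (1 - 0) : ℝ) ≠ 0)
  refine hlim.congr' ?_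
  filter_upwards [hx, ht.eventually_gt_atTop 0] with a hxa hta
  field_simp

theorem tendsto_one_sub_rate_mul_div (ht : Tendsto t l atTop) (hx : ∀ᶠ a in l, 0 < x a)
    (htx : Tendsto (fun a => t a / x a) l (𝓝 0))
    (hq : Tendsto (fun a => q a * x a / t a) l (𝓝 0)) :
    Tendsto (fun a => (1 - (1 - 2 * (t a - 1) / (x a + 2 * (t a - 1))) * (1 - q a)) *
      x a / (2 * t a)) l (𝓝 1) := by
  have hmain : Tendsto (fun a => (t a - 1) / t a) l (𝓝 1) := by
    have hlim : Tendsto (fun a => 1 - (t a)⁻¹) l (𝓝 1) := by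
      simpa using tendsto_const_nhds.sub ht.inv_tendsto_atTop
    refine hlim.congr' ?_
    filter_upwards [ht.eventually_gt_atTop 0] with a hta
    field_simp
  have herr : Tendsto (fun a => q a * x a / (2 * t a)) l (𝓝 0) := by
    simpa [div_mul_eq_div_div_swap] using hq.div_const 2
  have hlim := (hmain.add herr).mul
    (tendsto_div_add_two_mul_sub_one ht (hx.mono fun _ => ne_of_gt) htx)
  rw [add_zero, one_mul] at hlim
  refine hlim.congr' ?_
  filter_upwards [hx, ht.eventually_gt_atTop 1] with a hxa hta
  exact (one_sub_rate_mul_div_eq (by linarith) (by linarith)).symm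

end Asymptotics

theorem tendsto_log_two_sub_one_atTop : Tendsto (fun r => Nat.log 2 r - 1) atTop atTop :=
  (tendsto_sub_atTop_nat 1).comp (Nat.tendsto_log_atTop one_lt_two)

theorem tendsto_log_two_sub_one_div :
    Tendsto (fun r : ℕ => ((Nat.log 2 r - 1 : ℕ) : ℝ) / r) atTop (𝓝 0) := by
  have hbound : Tendsto (fun r : ℕ => ((Nat.log 2 r - 1 : ℕ) : ℝ) / 2 ^ (Nat.log 2 r - 1))
      atTop (𝓝 0) := by
    simpa [Function.comp_def] using
      (tendsto_pow_const_div_const_pow_of_one_lt 1 one_lt_two).comp tendsto_log_two_sub_one_atTop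
  refine tendsto_of_tendsto_of_tendsto_of_le_of_le' tendsto_const_nhds hbound
    (Eventually.of_forall fun r => by positivity) ?_
  filter_upwards [eventually_ne_atTop 0] with r hr
  gcongr
  exact_mod_cast Nat.pow_log_sub_one_le two_pos hr

theorem tendsto_two_zpow_neg_log_two_sub_one_mul_div :
    Tendsto (fun r : ℕ => (2 : ℝ) ^ (-((Nat.log 2 r - 1 : ℕ) : ℤ)) * r / (Nat.log 2 r - 1 : ℕ))
      atTop (𝓝 0) := by
  refine tendsto_of_tendsto_of_tendsto_of_le_of_le' tendsto_const_nhds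
    ((tendsto_const_div_atTop_nhds_zero_nat 4).comp tendsto_log_two_sub_one_atTop)
    (Eventually.of_forall fun r => by positivity) (Eventually.of_forall fun r => ?_)
  have hr : (r : ℝ) ≤ 4 * 2 ^ (Nat.log 2 r - 1) := by
    exact_mod_cast (Nat.lt_sq_mul_pow_log_sub_one one_lt_two r).le
  rw [Function.comp_apply]
  gcongr
  rw [zpow_neg, zpow_natCast, inv_mul_le_iff₀ (by positivity)]
  linarith

/-- with `s_r = ⌊log₂ r⌋ − 1` and
`μ_r = (1 − 2(s_r−1)/(r+2(s_r−1)))(1 − 2^{−s_r})`, one has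
`1 − μ_r ∼ 2 s_r / r` as `r → ∞` along even integers. -/
theorem rate_periodic_asymp
    (s : ℕ → ℕ) (hs : ∀ r, s r = Nat.log 2 r - 1)
    (μ : ℕ → ℝ) (hμ : ∀ r, μ r =
      (1 - 2*((s r : ℝ) - 1)/((r : ℝ) + 2*((s r : ℝ) - 1))) * (1 - (2:ℝ)^(-(s r : ℤ)))) :
    Tendsto (fun r : ℕ => (1 - μ r) * (r : ℝ) / (2 * (s r : ℝ)))
      (atTop ⊓ 𝓟 {r : ℕ | Even r}) (nhds 1) := by
  obtain rfl : s = fun r => Nat.log 2 r - 1 := funext hs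
  refine Tendsto.mono_left ?_ inf_le_left
  have key := tendsto_one_sub_rate_mul_div (x := fun r : ℕ => (r : ℝ))
    (t := fun r => ((Nat.log 2 r - 1 : ℕ) : ℝ))
    (tendsto_natCast_atTop_atTop.comp tendsto_log_two_sub_one_atTop)
    (eventually_gt_atTop 0 |>.mono fun r hr => Nat.cast_pos.2 hr)
    tendsto_log_two_sub_one_div tendsto_two_zpow_neg_log_two_sub_one_mul_div
  simpa only [hμ] using key
end
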